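/- arXiv:2601.09219 — 4 statements merged into one kernel-verified Lean document; each statement's English description precedes it below -/
import Mathlib

section
/- Let T be a tree rooted at r with link set E, let v ∈ V, and suppose the subtree T_v is minimally leaf-closed and every leaf in L_v is incident to at least one link of E. Then the set of up-links {up(a) : a ∈ L_v} covers every edge of T_v. -/
open scoped Classical

/-- The set of tree edges lying on a path (necessarily the unique one in a tree)
between `u` and `v`. -/
def pathEdges {V : Type*} (T : SimpleGraph V) (u v : V) : Set (Sym2 V) :=
  {e | ∃ p : T.Walk u v, p.IsPath ∧ e ∈ p.edges}

/-- The set of vertices lying on a path between `u` and `v`. -/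
def pathSupport {V : Type*} (T : SimpleGraph V) (u v : V) : Set V :=
  {w | ∃ p : T.Walk u v, p.IsPath ∧ w ∈ p.support}

/-- The link `l` covers the tree edge `e` : `e` lies on the tree path between the
endpoints of `l`. -/
def Covers {V : Type*} (T : SimpleGraph V) (l e : Sym2 V) : Prop :=
  ∃ u v, l = s(u, v) ∧ e ∈ pathEdges T u v

/-- A set `F` of links covers the tree `T` (is feasible): every edge of `T` is covered
by some link of `F`. -/
def CoversTree {V : Type*} (T : SimpleGraph V) (F : Set (Sym2 V)) : Prop :=
  ∀ e ∈ T.edgeSet, ∃ l ∈ F, Covers T l e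

/-- `x` belongs to the subtree `T_v` of `T` rooted at `r`:
`v` lies on the tree path from `x` to the root `r`. -/
def InSubtree {V : Type*} (T : SimpleGraph V) (r v x : V) : Prop :=
  v ∈ pathSupport T x r

/-- A leaf is a vertex with exactly one neighbour (degree one). -/
def IsLeaf {V : Type*} (T : SimpleGraph V) (v : V) : Prop :=
  ∃! w, T.Adj v w

/-- `y` is the parent of `x` in the tree `T` rooted at `r`. -/
def IsParent {V : Type*} (T : SimpleGraph V) (r x y : V) : Prop :=
  T.Adj x y ∧ InSubtree T r y x

/-- `w` is the least common ancestor of `u` and `v` in the tree `T` rooted at `r`. -/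
def IsLCA {V : Type*} (T : SimpleGraph V) (r u v w : V) : Prop :=
  w ∈ pathSupport T u v ∧ w ∈ pathSupport T u r ∧ w ∈ pathSupport T v r

/-- The link `cd` is a shadow of the link `ab`: the tree path between `c` and `d` is a
strict subpath of the tree path between `a` and `b`. -/
def IsShadow {V : Type*} (T : SimpleGraph V) (c d a b : V) : Prop :=
  c ≠ d ∧ pathEdges T c d ⊂ pathEdges T a b

/-- The link set `E` is shadow-closed: every shadow of a link of `E` belongs to `E`. -/
def ShadowClosed {V : Type*} (T : SimpleGraph V) (E : Finset (Sym2 V)) : Prop :=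
  ∀ a b c d, s(a, b) ∈ E → IsShadow T c d a b → s(c, d) ∈ E

/-- `F ⊆ E` is a shadows-minimal feasible solution: it is a minimum-cardinality cover of
`T` among subsets of `E`, and replacing any link of `F` by one of its shadows renders it
infeasible. -/
def ShadowsMinimal {V : Type*} (T : SimpleGraph V) (E F : Finset (Sym2 V)) : Prop :=
  F ⊆ E ∧ CoversTree T ↑F ∧
    (∀ F' : Finset (Sym2 V), F' ⊆ E → CoversTree T ↑F' → F.card ≤ F'.card) ∧
    ∀ a b c d, s(a, b) ∈ F → IsShadow T c d a b →
      ¬ CoversTree T ↑(insert s(c, d) (F.erase s(a, b)))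

/-- `deg_F(x)`: the number of links of `F` incident to `x`. -/
noncomputable def degF {V : Type*} (F : Finset (Sym2 V)) (x : V) : ℕ :=
  (F.filter (fun e => x ∈ e)).card

/-- `s` is a stem with twin link `ab`: an internal vertex whose children are exactly the
two leaves `a` and `b`, with `ab ∈ E`. -/
def IsStem {V : Type*} (T : SimpleGraph V) (r : V) (E : Finset (Sym2 V)) (s a b : V) : Prop :=
  a ≠ b ∧ ¬ IsLeaf T s ∧ IsLeaf T a ∧ IsLeaf T b ∧
    IsParent T r a s ∧ IsParent T r b s ∧
    (∀ x, IsParent T r x s → x = a ∨ x = b) ∧ s(a, b) ∈ E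

/-- The subtree `T_v` is `x`-closed: every link of `E` incident to `x` has both endpoints
in `T_v`. -/
def XClosed {V : Type*} (T : SimpleGraph V) (r : V) (E : Finset (Sym2 V)) (v x : V) : Prop :=
  ∀ l ∈ E, x ∈ l → ∀ y ∈ l, InSubtree T r v y

/-- The subtree `T_v` is leaf-closed: it is `x`-closed for every leaf `x ∈ L_v`. -/
def LeafClosed {V : Type*} (T : SimpleGraph V) (r : V) (E : Finset (Sym2 V)) (v : V) : Prop :=
  ∀ x, IsLeaf T x → InSubtree T r v x → XClosed T r E v x

/-- The subtree `T_v` is minimally leaf-closed: it is leaf-closed and no subtree rooted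
at a strict descendant of `v` is leaf-closed. -/
def MinLeafClosed {V : Type*} (T : SimpleGraph V) (r : V) (E : Finset (Sym2 V)) (v : V) : Prop :=
  LeafClosed T r E v ∧ ∀ u, InSubtree T r v u → u ≠ v → ¬ LeafClosed T r E u

/-- `ax` is an up-link of the leaf `a`: a link of `E` incident to `a` whose least common
ancestor with `a` is closest to the root among all links of `E` incident to `a`. -/
def IsUpLink {V : Type*} (T : SimpleGraph V) (r : V) (E : Finset (Sym2 V)) (a x : V) : Prop :=
  s(a, x) ∈ E ∧ ∀ y w w', s(a, y) ∈ E → IsLCA T r a x w → IsLCA T r a y w' →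
    T.dist w r ≤ T.dist w' r

/-- A matching: a set of links (pairs of distinct vertices) no two of which share an
endpoint. -/
def IsMatching {V : Type*} (M : Finset (Sym2 V)) : Prop :=
  (∀ l ∈ M, ¬ l.IsDiag) ∧ ∀ l ∈ M, ∀ l' ∈ M, l ≠ l' → ∀ x, x ∈ l → x ∉ l'

/-!
Orient the edge as `d`–`u` with `u` the parent of `d`. As `d ≠ v` lies in `T_v`, minimality
says that `T_d` is not leaf-closed: some leaf `a` below `d` has a link `az₀` leaving `T_d`,
so `lca(a, z₀)` lies strictly above `d`. An up-link `az` of `a` has its lca at least as high,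
hence the tree path from `a` to `z` climbs past `d` and uses the edge `du`.

Tree paths are handled through distances: `w` lies on the path from `x` to `y` iff
`d(x, w) + d(w, y) = d(x, y)`, and twice the depth of `lca(a, z)` is
`d(a, r) + d(z, r) - d(a, z)`.
-/

theorem exists_link_of_not_leafClosed {V : Type*} {T : SimpleGraph V} {r : V}
    {E : Finset (Sym2 V)} {d : V} (h : ¬ LeafClosed T r E d) :
    ∃ a z, IsLeaf T a ∧ InSubtree T r d a ∧ s(a, z) ∈ E ∧ ¬ InSubtree T r d z := by
  simp only [LeafClosed, XClosed, not_forall, exists_prop] at h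
  obtain ⟨a, ha, had, l, hl, hal, z, hzl, hz⟩ := h
  have haz : a ≠ z := by rintro rfl; exact hz had
  exact ⟨a, z, ha, had, (Sym2.mem_and_mem_iff haz).mp ⟨hal, hzl⟩ ▸ hl, hz⟩

namespace SimpleGraph

variable {V : Type*} {T : SimpleGraph V}

theorem Walk.IsPath.append {u v w : V} {p : T.Walk u v} {q : T.Walk v w} (hp : p.IsPath)
    (hq : q.IsPath) (h : ∀ x ∈ p.support, x ∈ q.support → x = v) : (p.append q).IsPath := by
  have hq' := hq.support_nodup
  rw [← q.cons_tail_support, List.nodup_cons] at hq'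
  rw [Walk.isPath_def, Walk.support_append, List.nodup_append]
  refine ⟨hp.support_nodup, hq'.2, fun x hx y hy hxy => ?_⟩
  subst hxy
  obtain rfl := h x hx (List.mem_of_mem_tail hy)
  exact hq'.1 hy

theorem pathSupport_comm (T : SimpleGraph V) (u v : V) :
    pathSupport T u v = pathSupport T v u := by
  ext w
  constructor <;> rintro ⟨p, hp, hw⟩ <;> exact ⟨p.reverse, hp.reverse, by simpa using hw⟩

theorem Connected.mem_pathEdges_of_adj (hT : T.Connected) {u v x y : V} (hxy : T.Adj x y)
    (h : T.dist u x + 1 + T.dist y v = T.dist u v) : s(x, y) ∈ pathEdges T u v := by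
  obtain ⟨p, hp⟩ := hT.exists_walk_length_eq_dist u x
  obtain ⟨q, hq⟩ := hT.exists_walk_length_eq_dist y v
  refine ⟨p.append (.cons hxy q), Walk.isPath_of_length_eq_dist _ ?_, by simp⟩
  simp only [Walk.length_append, Walk.length_cons, hp, hq]
  omega

theorem IsTree.length_eq_dist_of_isPath (hT : T.IsTree) {u v : V} {p : T.Walk u v}
    (hp : p.IsPath) : p.length = T.dist u v := by
  obtain ⟨q, hq, hlen⟩ := hT.connected.exists_path_of_dist u v
  rwa [(hT.existsUnique_path u v).unique hp hq]

theorem IsTree.mem_pathSupport_iff (hT : T.IsTree) {u v w : V} :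
    w ∈ pathSupport T u v ↔ T.dist u w + T.dist w v = T.dist u v := by
  constructor
  · rintro ⟨p, hp, hw⟩
    rw [← hT.length_eq_dist_of_isPath (hp.takeUntil hw),
      ← hT.length_eq_dist_of_isPath (hp.dropUntil hw), ← hT.length_eq_dist_of_isPath hp,
      ← Walk.length_append, Walk.take_spec]
  · intro h
    obtain ⟨p, hp⟩ := hT.connected.exists_walk_length_eq_dist u w
    obtain ⟨q, hq⟩ := hT.connected.exists_walk_length_eq_dist w v
    refine ⟨p.append q, Walk.isPath_of_length_eq_dist _ ?_, by simp⟩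
    rw [Walk.length_append, hp, hq, h]

theorem IsTree.mem_pathSupport_of_dist_le (hT : T.IsTree) {a r d m : V}
    (hd : d ∈ pathSupport T a r) (hm : m ∈ pathSupport T a r) (hle : T.dist a d ≤ T.dist a m) :
    d ∈ pathSupport T a m := by
  obtain ⟨p, hp, hdp⟩ := hd
  obtain ⟨p', hp', hmp⟩ := hm
  rw [(hT.existsUnique_path a r).unique hp' hp] at hmp
  obtain ⟨q, s, hq, hs, rfl⟩ := hp.mem_support_iff_exists_append.mp hmp
  rcases (Walk.mem_support_append_iff _ _).mp hdp with hdq | hds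
  · exact ⟨q, hq, hdq⟩
  · have hmd := hT.mem_pathSupport_iff.mp ⟨s, hs, hds⟩
    have had := hT.mem_pathSupport_iff.mp ⟨_, hp, hdp⟩
    have ham := hT.mem_pathSupport_iff.mp ⟨_, hp, hmp⟩
    rw [hT.mem_pathSupport_iff, dist_comm (u := d)]
    omega

theorem IsTree.pathSupport_subset (hT : T.IsTree) {a r m : V} (hm : m ∈ pathSupport T a r) :
    pathSupport T a m ⊆ pathSupport T a r := by
  intro x hx
  rw [hT.mem_pathSupport_iff] at hm hx ⊢
  have := hT.connected.dist_triangle (u := x) (v := m) (w := r)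
  have := hT.connected.dist_triangle (u := a) (v := x) (w := r)
  omega

theorem IsTree.exists_isLCA (hT : T.IsTree) (r a z : V) : ∃ m, IsLCA T r a z m := by
  have hr : r ∈ pathSupport T a r ∩ pathSupport T z r := by
    simp only [Set.mem_inter_iff, hT.mem_pathSupport_iff, dist_self, add_zero, and_self]
  -- `m` is the common ancestor of `a` and `z` nearest to `a`
  obtain ⟨m, ⟨hma, hmz⟩, hmin⟩ := (InvImage.wf (T.dist a) wellFounded_lt).has_min _ ⟨r, hr⟩
  refine ⟨m, ?_, hma, hmz⟩
  obtain ⟨p, hp, -⟩ := hT.connected.exists_path_of_dist a m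
  obtain ⟨q, hq, -⟩ := hT.connected.exists_path_of_dist m z
  refine ⟨p.append q, hp.append hq fun x hxp hxq => ?_, by simp⟩
  have hxa : x ∈ pathSupport T a m := ⟨p, hp, hxp⟩
  have hxz : x ∈ pathSupport T z m := pathSupport_comm T m z ▸ ⟨q, hq, hxq⟩
  have hle := hmin x ⟨hT.pathSupport_subset hma hxa, hT.pathSupport_subset hmz hxz⟩
  simp only [InvImage, not_lt] at hle
  rw [hT.mem_pathSupport_iff] at hxa
  exact hT.connected.dist_eq_zero_iff.mp (by omega)

theorem IsTree.two_mul_dist_add_dist_of_isLCA (hT : T.IsTree) {r a z w : V}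
    (h : IsLCA T r a z w) : 2 * T.dist w r + T.dist a z = T.dist a r + T.dist z r := by
  obtain ⟨h₁, h₂, h₃⟩ := h
  rw [hT.mem_pathSupport_iff] at h₁ h₂ h₃
  rw [dist_comm (u := z)] at h₃
  omega

theorem IsTree.inSubtree_iff (hT : T.IsTree) {r v x : V} :
    InSubtree T r v x ↔ T.dist x v + T.dist v r = T.dist x r :=
  hT.mem_pathSupport_iff

theorem IsTree.inSubtree_trans (hT : T.IsTree) {r u v w : V} (huv : InSubtree T r u v)
    (hvw : InSubtree T r v w) : InSubtree T r u w := by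
  unfold InSubtree at *
  rw [pathSupport_comm] at huv hvw ⊢
  exact hT.pathSupport_subset hvw huv

theorem IsTree.exists_isUpLink (hT : T.IsTree) (r : V) {E : Finset (Sym2 V)} {a z₀ : V}
    (h : s(a, z₀) ∈ E) : ∃ z, IsUpLink T r E a z := by
  -- twice the depth of `lca(a, z)`, by `two_mul_dist_add_dist_of_isLCA`
  let depth₂ (z : V) := T.dist a r + T.dist z r - T.dist a z
  obtain ⟨z, hz, hmin⟩ :=
    (InvImage.wf depth₂ wellFounded_lt).has_min {z | s(a, z) ∈ E} ⟨z₀, h⟩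
  refine ⟨z, hz, fun y w w' hy hw hw' => ?_⟩
  have hle := hmin y hy
  simp only [InvImage, not_lt, depth₂] at hle
  have := hT.two_mul_dist_add_dist_of_isLCA hw
  have := hT.two_mul_dist_add_dist_of_isLCA hw'
  omega

theorem IsTree.dist_lt_of_isLCA_of_not_inSubtree (hT : T.IsTree) {r d a z m : V}
    (ha : InSubtree T r d a) (hz : ¬ InSubtree T r d z) (hm : IsLCA T r a z m) :
    T.dist m r < T.dist d r := by
  obtain ⟨-, hma, hmz⟩ := hm
  by_contra! hle
  have hmd : m ∈ pathSupport T a d := by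
    refine hT.mem_pathSupport_of_dist_le hma ha ?_
    rw [hT.inSubtree_iff] at ha
    rw [hT.mem_pathSupport_iff] at hma
    omega
  refine hz (hT.inSubtree_iff.mpr ?_)
  rw [hT.inSubtree_iff] at ha
  rw [hT.mem_pathSupport_iff] at hma hmz hmd
  have := hT.connected.dist_triangle (u := z) (v := m) (w := d)
  have := hT.connected.dist_triangle (u := z) (v := d) (w := r)
  omega

theorem IsTree.mem_pathEdges_of_isLCA (hT : T.IsTree) {r d u a z m : V} (hdu : T.Adj d u)
    (hdepth : T.dist d r = T.dist u r + 1) (ha : InSubtree T r d a) (hm : IsLCA T r a z m)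
    (hlt : T.dist m r < T.dist d r) : s(d, u) ∈ pathEdges T a z := by
  obtain ⟨hmaz, hma, -⟩ := hm
  have hd1 : T.dist d u = 1 := dist_eq_one_iff_adj.mpr hdu
  have := hT.connected.dist_triangle (u := a) (v := d) (w := u)
  have := hT.connected.dist_triangle (u := a) (v := u) (w := r)
  rw [hT.inSubtree_iff] at ha
  have hua : u ∈ pathSupport T a r := by rw [hT.mem_pathSupport_iff]; omega
  have hum : u ∈ pathSupport T a m := by
    refine hT.mem_pathSupport_of_dist_le hua hma ?_
    rw [hT.mem_pathSupport_iff] at hua hma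
    omega
  rw [hT.mem_pathSupport_iff] at hua hum hmaz
  have := hT.connected.dist_triangle (u := u) (v := m) (w := z)
  have := hT.connected.dist_triangle (u := a) (v := u) (w := z)
  exact hT.connected.mem_pathEdges_of_adj hdu (by omega)

theorem IsTree.exists_isUpLink_covers (hT : T.IsTree) {r v : V} {E : Finset (Sym2 V)}
    (hmin : MinLeafClosed T r E v) {d u : V} (hdu : T.Adj d u)
    (hdepth : T.dist d r = T.dist u r + 1) (hd : InSubtree T r v d) (hu : InSubtree T r v u) :
    ∃ a z, IsLeaf T a ∧ InSubtree T r v a ∧ IsUpLink T r E a z ∧ Covers T s(a, z) s(d, u) := by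
  have hdv : d ≠ v := by
    rintro rfl
    rw [hT.inSubtree_iff] at hu
    omega
  obtain ⟨a, z₀, ha, had, hz₀, hz₀d⟩ := exists_link_of_not_leafClosed (hmin.2 d hd hdv)
  obtain ⟨z, hup⟩ := hT.exists_isUpLink r hz₀
  obtain ⟨m₀, hm₀⟩ := hT.exists_isLCA r a z₀
  obtain ⟨m, hm⟩ := hT.exists_isLCA r a z
  have hm₀d := hT.dist_lt_of_isLCA_of_not_inSubtree had hz₀d hm₀
  have hmm₀ := hup.2 z₀ m m₀ hz₀ hm hm₀
  exact ⟨a, z, ha, hT.inSubtree_trans hd had, hup, a, z, rfl,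
    hT.mem_pathEdges_of_isLCA hdu hdepth had hm (by omega)⟩

end SimpleGraph

theorem statement1_general {V : Type*} (T : SimpleGraph V) (hT : T.IsTree) (r : V)
    (E : Finset (Sym2 V))
    (v : V) (hmin : MinLeafClosed T r E v) :
    ∀ x y, T.Adj x y → InSubtree T r v x → InSubtree T r v y →
      ∃ a z, IsLeaf T a ∧ InSubtree T r v a ∧ IsUpLink T r E a z ∧
        Covers T s(a, z) s(x, y) := by
  intro x y hxy hx hy
  rcases hT.dist_eq_dist_add_one_of_adj r hxy with h | h
  · refine hT.exists_isUpLink_covers hmin hxy ?_ hx hy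
    rwa [SimpleGraph.dist_comm, SimpleGraph.dist_comm (u := y)]
  · obtain ⟨a, z, ha, hav, hup, hcov⟩ := hT.exists_isUpLink_covers hmin hxy.symm
      (by rwa [SimpleGraph.dist_comm, SimpleGraph.dist_comm (u := x)]) hy hx
    exact ⟨a, z, ha, hav, hup, by rwa [Sym2.eq_swap (a := x)]⟩

/-- Cover Claim: if the subtree `T_v` is minimally leaf-closed and every
leaf of `T_v` is incident to some link, then the up-links of the leaves of `T_v` cover
every edge of `T_v`. -/
theorem statement1 {V : Type*} [Fintype V] (T : SimpleGraph V) (hT : T.IsTree) (r : V)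
    (hr : ¬ IsLeaf T r) (E : Finset (Sym2 V))
    (hlinks : ∀ l ∈ E, ¬ l.IsDiag)
    (v : V) (hmin : MinLeafClosed T r E v)
    (hinc : ∀ a, IsLeaf T a → InSubtree T r v a → ∃ l ∈ E, a ∈ l) :
    ∀ x y, T.Adj x y → InSubtree T r v x → InSubtree T r v y →
      ∃ a z, IsLeaf T a ∧ InSubtree T r v a ∧ IsUpLink T r E a z ∧
        Covers T s(a, z) s(x, y) :=
  statement1_general T hT r E v hmin
end

section
/- Let T be a tree rooted at r with a shadow-closed link set E, and let F ⊆ E be a shadows-minimal feasible cover of T. Then deg_F(a) = 1 for every leaf a of T. -/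
open scoped Classical

section Aux
variable {V : Type*} {T : SimpleGraph V}

lemma pathEdges_eq (hT : T.IsTree) {u v : V} (p : T.Walk u v) (hp : p.IsPath) :
    pathEdges T u v = {e | e ∈ p.edges} := by
  ext e
  constructor
  · rintro ⟨q, hq, he⟩
    rwa [(hT.existsUnique_path u v).unique hq hp] at he
  · intro he; exact ⟨p, hp, he⟩

lemma pathEdges_comm (u v : V) : pathEdges T u v = pathEdges T v u := by
  ext e
  constructor <;> rintro ⟨p, hp, he⟩ <;>
    exact ⟨p.reverse, hp.reverse, by simpa using he⟩

lemma leaf_endpoint {a s : V} (hadj : T.Adj a s) (huniq : ∀ w, T.Adj a w → w = s) :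
    ∀ {u v : V} (p : T.Walk u v), p.IsPath → a ∈ p.support → a = u ∨ a = v := by
  intro u v p
  induction p with
  | nil => intro _ h; simp at h; exact Or.inl h
  | @cons u b v h q ih =>
    intro hp hmem
    rw [SimpleGraph.Walk.support_cons, List.mem_cons] at hmem
    rcases hmem with h1 | h2
    · exact Or.inl h1
    rcases ih hp.of_cons h2 with hb | hv
    · subst hb
      have hus : u = s := huniq u h.symm
      cases q with
      | nil => exact Or.inr rfl
      | @cons _ c _ h' q' =>
        have hcs : c = s := huniq c h'
        exfalso
        have hni := ((SimpleGraph.Walk.cons_isPath_iff h _).mp hp).2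
        apply hni
        rw [SimpleGraph.Walk.support_cons, List.mem_cons]
        exact Or.inr (by rw [hus, ← hcs]; exact q'.start_mem_support)
    · exact Or.inr hv

/-- The unique path from a leaf `a` (with neighbor `s`) to `x ≠ a` starts with edge `as`. -/
lemma leaf_path (hT : T.IsTree) {a s x : V} (hadj : T.Adj a s) (huniq : ∀ w, T.Adj a w → w = s)
    (hx : x ≠ a) :
    s(a, s) ∈ pathEdges T a x ∧
      pathEdges T a x = insert s(a, s) (pathEdges T s x) ∧
      s(a, s) ∉ pathEdges T s x := by
  obtain ⟨p, hp, -⟩ := hT.existsUnique_path a x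
  cases p with
  | nil => exact absurd rfl hx
  | @cons _ b _ h q =>
    rw [← huniq b h]
    have hq : q.IsPath := hp.of_cons
    have ha : a ∉ q.support := ((SimpleGraph.Walk.cons_isPath_iff h q).mp hp).2
    have hnotin : s(a, b) ∉ pathEdges T b x := by
      rw [pathEdges_eq hT q hq]
      intro he
      exact ha (q.fst_mem_support_of_mem_edges he)
    refine ⟨⟨SimpleGraph.Walk.cons h q, hp, by simp⟩, ?_, hnotin⟩
    rw [pathEdges_eq hT _ hp, pathEdges_eq hT q hq]
    ext e
    simp only [SimpleGraph.Walk.edges_cons, List.mem_cons, Set.mem_setOf_eq, Set.mem_insert_iff]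

end Aux

lemma mem_pathEdges_of_sym2_eq {V : Type*} {T : SimpleGraph V} {u v a b : V}
    (h : s(u, v) = s(a, b)) {e : Sym2 V} (he : e ∈ pathEdges T u v) :
    e ∈ pathEdges T a b := by
  rcases Sym2.eq_iff.mp h with ⟨rfl, rfl⟩ | ⟨rfl, rfl⟩
  · exact he
  · rw [pathEdges_comm]; exact he

/-- for a shadow-closed link set `E` and a shadows-minimal feasible cover
`F ⊆ E`, every leaf of `T` is incident to exactly one link of `F`. -/
theorem statement4 {V : Type*} [Fintype V] (T : SimpleGraph V) (hT : T.IsTree) (r : V)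
    (hr : ¬ IsLeaf T r) (E F : Finset (Sym2 V))
    (hlinks : ∀ l ∈ E, ¬ l.IsDiag)
    (hE : ShadowClosed T E)
    (hF : ShadowsMinimal T E F) :
    ∀ a, IsLeaf T a → degF F a = 1 := by
  obtain ⟨hFE, hcov, hmin, hshad⟩ := hF
  intro a ha
  obtain ⟨s, hadj, huniq⟩ := ha
  have hedge : s(a, s) ∈ T.edgeSet := hadj
  obtain ⟨l1, hl1F, u, v, hl1, p, hp, hep⟩ := hcov s(a, s) hedge
  have hal1 : a ∈ l1 := by
    have hmem : a ∈ p.support := p.fst_mem_support_of_mem_edges hep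
    rcases leaf_endpoint hadj huniq p hp hmem with rfl | rfl
    · rw [hl1]; exact Sym2.mem_mk_left _ _
    · rw [hl1]; exact Sym2.mem_mk_right _ _
  -- key: any two links of F incident to a coincide
  have key : ∀ l ∈ F, ∀ l' ∈ F, a ∈ l → a ∈ l' → l = l' := by
    intro l hl l' hl' hal hal'
    by_contra hne
    obtain ⟨x, rfl⟩ := Sym2.mem_iff_exists.mp hal
    obtain ⟨y, rfl⟩ := Sym2.mem_iff_exists.mp hal'
    have hxa : x ≠ a := fun h => hlinks _ (hFE hl) (by simp [h])
    have hya : y ≠ a := fun h => hlinks _ (hFE hl') (by simp [h])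
    obtain ⟨hyin, -, -⟩ := leaf_path hT hadj huniq hya
    by_cases hxs : x = s
    · -- l covers only the edge as, which l' also covers: F.erase l is feasible
      rw [hxs] at hl hne
      have hcov' : CoversTree T ↑(F.erase s(a, s)) := by
        intro e he
        obtain ⟨l2, hl2F, u2, v2, hl2, he2⟩ := hcov e he
        by_cases h2 : l2 = s(a, s)
        · have he3 : e ∈ pathEdges T a s :=
            mem_pathEdges_of_sym2_eq (hl2.symm.trans h2) he2
          have he4 : e = s(a, s) := by
            rw [pathEdges_eq hT (SimpleGraph.Walk.cons hadj SimpleGraph.Walk.nil)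
              (by simp [SimpleGraph.Walk.cons_isPath_iff, hadj.ne])] at he3
            simpa using he3
          exact ⟨s(a, y), Finset.mem_coe.mpr (Finset.mem_erase.mpr ⟨Ne.symm hne, hl'⟩),
            a, y, rfl, he4 ▸ hyin⟩
        · exact ⟨l2, Finset.mem_coe.mpr
            (Finset.mem_erase.mpr ⟨h2, Finset.mem_coe.mp hl2F⟩), u2, v2, hl2, he2⟩
      have hle := hmin _ (Finset.Subset.trans (Finset.erase_subset _ _) hFE) hcov'
      have hlt := Finset.card_erase_lt_of_mem hl
      omega
    · -- replace l = s(a,x) by its shadow s(s,x)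
      obtain ⟨hxin, hxeq, hxnot⟩ := leaf_path hT hadj huniq hxa
      have hshadow : IsShadow T s x a x := by
        refine ⟨fun h => hxs h.symm, ?_, fun hsub => hxnot (hsub hxin)⟩
        rw [hxeq]; exact Set.subset_insert _ _
      have hcov' : CoversTree T ↑(insert s(s, x) (F.erase s(a, x))) := by
        intro e he
        obtain ⟨l2, hl2F, u2, v2, hl2, he2⟩ := hcov e he
        by_cases h2 : l2 = s(a, x)
        · have he3 : e ∈ pathEdges T a x :=
            mem_pathEdges_of_sym2_eq (hl2.symm.trans h2) he2
          rw [hxeq] at he3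
          rcases he3 with rfl | he4
          · exact ⟨s(a, y), Finset.mem_coe.mpr (Finset.mem_insert_of_mem
              (Finset.mem_erase.mpr ⟨Ne.symm hne, hl'⟩)), a, y, rfl, hyin⟩
          · exact ⟨s(s, x), Finset.mem_coe.mpr (Finset.mem_insert_self _ _), s, x, rfl, he4⟩
        · exact ⟨l2, Finset.mem_coe.mpr (Finset.mem_insert_of_mem
            (Finset.mem_erase.mpr ⟨h2, Finset.mem_coe.mp hl2F⟩)), u2, v2, hl2, he2⟩
      exact hshad a x s x hl hshadow hcov'
  have hsingle : F.filter (fun e => a ∈ e) = {l1} := by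
    rw [Finset.eq_singleton_iff_unique_mem]
    refine ⟨Finset.mem_filter.mpr ⟨Finset.mem_coe.mp hl1F, hal1⟩, ?_⟩
    intro l hl
    obtain ⟨hlF, hal⟩ := Finset.mem_filter.mp hl
    exact key l hlF l1 (Finset.mem_coe.mp hl1F) hal hal1
  simp [degF, hsingle]
end

section
/- Let T be a tree rooted at r with link set E, let a be a leaf incident to at least one link, and let x ≠ r be a vertex lying on the path from a to r. If some link of E incident to a covers the tree edge between x and its parent p(x), then every up-link up(a) of a covers the tree edge between x and p(x). -/
/-!
In a tree, `v` lies on the path between `u` and `w` iff `dist u v + dist v w = dist u w`, and an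
edge lies on that path iff both its endpoints do. Hence an ancestor `v` of the leaf `a` lies on
the path from `a` to `b` iff `v` is at least as deep as `lca(a, b)`. So the link `ab` covers the
edge `x p(x)` iff `p(x)` is at least as deep as `lca(a, b)`, and an up-link `az`, whose
`lca(a, z)` is at most as deep as `lca(a, b)`, covers it as well.
-/

open scoped Classical

namespace SimpleGraph

variable {V : Type*} {T : SimpleGraph V} {u v w x y : V}

theorem Walk.IsPath.append_of_support_inter {p : T.Walk u v} {q : T.Walk v w}
    (hp : p.IsPath) (hq : q.IsPath) (h : ∀ s ∈ p.support, s ∈ q.support → s = v) :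
    (p.append q).IsPath := by
  rw [Walk.isPath_def, Walk.support_append]
  refine hp.support_nodup.append hq.support_nodup.tail fun s hsp hsq => ?_
  obtain rfl := h s hsp (List.mem_of_mem_tail hsq)
  have hnodup := hq.support_nodup
  rw [← Walk.cons_tail_support] at hnodup
  exact (List.nodup_cons.mp hnodup).1 hsq

theorem IsAcyclic.mk_mem_edges_of_mem_support (hT : T.IsAcyclic) {p : T.Walk u v}
    (hp : p.IsPath) (hxy : T.Adj x y) (hx : x ∈ p.support) (hy : y ∈ p.support) :
    s(x, y) ∈ p.edges := by
  have key : ∀ {x y}, T.Adj x y → ∀ (hy : y ∈ p.support),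
      x ∈ (p.takeUntil y hy).support → s(x, y) ∈ p.edges := by
    intro x y hxy hy hx
    apply p.edges_takeUntil_subset_edges hy
    rw [hT.path_concat ((hp.takeUntil hy).takeUntil hx) (hp.takeUntil hy) hxy hx,
      Walk.edges_concat]
    simp
  by_cases h : x ∈ (p.takeUntil y hy).support
  · exact key hxy hy h
  · rw [Sym2.eq_swap]
    exact key hxy.symm hx <| hT.mem_support_of_ne_mem_support_of_adj_of_isPath
      (hp.takeUntil hx) (hp.takeUntil hy) hxy h

theorem pathEdges_comm (T : SimpleGraph V) (u v : V) : pathEdges T u v = pathEdges T v u := by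
  ext e
  constructor <;>
  · rintro ⟨p, hp, he⟩
    exact ⟨p.reverse, hp.reverse, by simpa using he⟩

theorem covers_mk_iff {e : Sym2 V} : Covers T s(u, v) e ↔ e ∈ pathEdges T u v := by
  refine ⟨fun ⟨u', v', huv, he⟩ => ?_, fun he => ⟨u, v, rfl, he⟩⟩
  rcases Sym2.eq_iff.mp huv with ⟨rfl, rfl⟩ | ⟨rfl, rfl⟩
  · exact he
  · rwa [pathEdges_comm]

namespace IsTree

theorem length_eq_dist_of_isPath_s11 (hT : T.IsTree) {p : T.Walk u v} (hp : p.IsPath) :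
    p.length = T.dist u v := by
  obtain ⟨q, hq, hql⟩ := hT.connected.exists_path_of_dist u v
  rw [(hT.existsUnique_path u v).unique hp hq, hql]

theorem mem_pathSupport_iff_mem_support (hT : T.IsTree) {p : T.Walk u v} (hp : p.IsPath) :
    w ∈ pathSupport T u v ↔ w ∈ p.support := by
  refine ⟨fun ⟨q, hq, hw⟩ => ?_, fun hw => ⟨p, hp, hw⟩⟩
  rwa [(hT.existsUnique_path u v).unique hq hp] at hw

theorem mem_pathSupport_iff_dist (hT : T.IsTree) :
    w ∈ pathSupport T u v ↔ T.dist u w + T.dist w v = T.dist u v := by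
  constructor
  · rintro ⟨p, hp, hw⟩
    obtain ⟨q, s, hq, hs, rfl⟩ := hp.mem_support_iff_exists_append.mp hw
    rw [← hT.length_eq_dist_of_isPath_s11 hq, ← hT.length_eq_dist_of_isPath_s11 hs,
      ← hT.length_eq_dist_of_isPath_s11 hp, Walk.length_append]
  · intro h
    obtain ⟨q, -, hql⟩ := hT.connected.exists_path_of_dist u w
    obtain ⟨s, -, hsl⟩ := hT.connected.exists_path_of_dist w v
    refine ⟨q.append s, (q.append s).isPath_of_length_eq_dist ?_, ?_⟩
    · rw [Walk.length_append, hql, hsl, h]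
    · simp

theorem mem_pathSupport_trans (hT : T.IsTree) (hx : x ∈ pathSupport T u v)
    (hy : y ∈ pathSupport T x v) : y ∈ pathSupport T u v := by
  rw [hT.mem_pathSupport_iff_dist] at *
  have := hT.connected.dist_triangle (u := u) (v := x) (w := y)
  have := hT.connected.dist_triangle (u := u) (v := y) (w := v)
  omega

theorem mem_pathSupport_or_mem_pathSupport (hT : T.IsTree) (hv : v ∈ pathSupport T u x)
    (hw : w ∈ pathSupport T u x) : v ∈ pathSupport T u w ∨ v ∈ pathSupport T w x := by
  obtain ⟨p, hp, hwp⟩ := hw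
  obtain ⟨q, s, hq, hs, rfl⟩ := hp.mem_support_iff_exists_append.mp hwp
  rw [hT.mem_pathSupport_iff_mem_support hp, Walk.mem_support_append_iff] at hv
  exact hv.imp (fun h => ⟨q, hq, h⟩) (fun h => ⟨s, hs, h⟩)

theorem mk_mem_pathEdges_iff (hT : T.IsTree) (hxy : T.Adj x y) :
    s(x, y) ∈ pathEdges T u v ↔ x ∈ pathSupport T u v ∧ y ∈ pathSupport T u v := by
  constructor
  · rintro ⟨p, hp, he⟩
    exact ⟨⟨p, hp, p.fst_mem_support_of_mem_edges he⟩,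
      ⟨p, hp, p.snd_mem_support_of_mem_edges he⟩⟩
  · rintro ⟨⟨p, hp, hx⟩, hy⟩
    rw [hT.mem_pathSupport_iff_mem_support hp] at hy
    exact ⟨p, hp, hT.isAcyclic.mk_mem_edges_of_mem_support hp hxy hx hy⟩

theorem exists_isLCA_s11 (hT : T.IsTree) (r a b : V) : ∃ w, IsLCA T r a b w := by
  -- `w` is the common ancestor of `a` and `b` nearest to `a`: a second common vertex of the
  -- paths `a → w` and `w → b` would be a nearer one.
  obtain ⟨w, ⟨hwa, hwb⟩, hmin⟩ := (InvImage.wf (T.dist a) wellFounded_lt).has_min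
    {v | v ∈ pathSupport T a r ∧ v ∈ pathSupport T b r}
    ⟨r, by simp [hT.mem_pathSupport_iff_dist]⟩
  obtain ⟨q, hq, hql⟩ := hT.connected.exists_path_of_dist a w
  obtain ⟨s, hs, hsl⟩ := hT.connected.exists_path_of_dist w b
  have hqs : (q.append s).IsPath := hq.append_of_support_inter hs fun c hcq hcs => by
    by_contra hcw
    have hcw₀ : T.dist c w ≠ 0 := fun h => hcw (hT.connected.dist_eq_zero_iff.mp h)
    rw [← hT.mem_pathSupport_iff_mem_support hq, hT.mem_pathSupport_iff_dist] at hcq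
    rw [← hT.mem_pathSupport_iff_mem_support hs, hT.mem_pathSupport_iff_dist] at hcs
    rw [hT.mem_pathSupport_iff_dist] at hwa hwb
    have := hT.connected.dist_triangle (u := a) (v := c) (w := r)
    have := hT.connected.dist_triangle (u := b) (v := c) (w := r)
    have := hT.connected.dist_triangle (u := c) (v := w) (w := r)
    have := T.dist_comm (u := c) (v := w)
    have := T.dist_comm (u := c) (v := b)
    have := T.dist_comm (u := w) (v := b)
    refine hmin c ⟨?_, ?_⟩ (show T.dist a c < T.dist a w by omega) <;>
      rw [hT.mem_pathSupport_iff_dist] <;> omega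
  exact ⟨w, (hT.mem_pathSupport_iff_mem_support hqs).mpr (by simp), hwa, hwb⟩

theorem mem_pathSupport_iff_dist_le (hT : T.IsTree) {r a b : V} (hw : IsLCA T r a b w)
    (hv : v ∈ pathSupport T a r) : v ∈ pathSupport T a b ↔ T.dist w r ≤ T.dist v r := by
  obtain ⟨hwab, hwa, hwb⟩ := hw
  have := hT.connected.dist_triangle (u := a) (v := v) (w := b)
  have := hT.connected.dist_triangle (u := v) (v := w) (w := b)
  have := hT.connected.dist_triangle (u := b) (v := v) (w := r)
  have := T.dist_comm (u := v) (v := w)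
  have := T.dist_comm (u := v) (v := b)
  have := T.dist_comm (u := w) (v := b)
  rcases hT.mem_pathSupport_or_mem_pathSupport hv hwa with hvw | hvw <;>
    simp only [hT.mem_pathSupport_iff_dist] at * <;> omega

end IsTree

end SimpleGraph

theorem statement11_general {V : Type*} (T : SimpleGraph V) (hT : T.IsTree) (r : V)
    (E : Finset (Sym2 V)) (a : V) (x y : V) (hxpath : x ∈ pathSupport T a r)
    (hpar : IsParent T r x y)
    (hcov : ∃ l ∈ E, a ∈ l ∧ Covers T l s(x, y)) :
    ∀ z, IsUpLink T r E a z → Covers T s(a, z) s(x, y) := by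
  intro z hz
  obtain ⟨l, hlE, hal, hl⟩ := hcov
  obtain ⟨b, rfl⟩ := Sym2.mem_iff_exists.mp hal
  have hypath : y ∈ pathSupport T a r := hT.mem_pathSupport_trans hxpath hpar.2
  obtain ⟨w, hw⟩ := hT.exists_isLCA_s11 r a z
  obtain ⟨w', hw'⟩ := hT.exists_isLCA_s11 r a b
  have hww' : T.dist w r ≤ T.dist w' r := hz.2 b w w' hlE hw hw'
  rw [SimpleGraph.covers_mk_iff, hT.mk_mem_pathEdges_iff hpar.1,
    hT.mem_pathSupport_iff_dist_le hw' hxpath, hT.mem_pathSupport_iff_dist_le hw' hypath] at hl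
  rw [SimpleGraph.covers_mk_iff, hT.mk_mem_pathEdges_iff hpar.1,
    hT.mem_pathSupport_iff_dist_le hw hxpath, hT.mem_pathSupport_iff_dist_le hw hypath]
  omega

/-- let `a` be a leaf incident to some link and `x ≠ r` a vertex on the
path from `a` to the root with parent `y`. If some link of `E` incident to `a` covers
the tree edge `xy`, then every up-link of `a` covers it. -/
theorem statement11 {V : Type*} [Fintype V] (T : SimpleGraph V) (hT : T.IsTree) (r : V)
    (hr : ¬ IsLeaf T r) (E : Finset (Sym2 V))
    (hlinks : ∀ l ∈ E, ¬ l.IsDiag)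
    (a : V) (ha : IsLeaf T a) (haE : ∃ l ∈ E, a ∈ l)
    (x y : V) (hx : x ≠ r) (hxpath : x ∈ pathSupport T a r)
    (hpar : IsParent T r x y)
    (hcov : ∃ l ∈ E, a ∈ l ∧ Covers T l s(x, y)) :
    ∀ z, IsUpLink T r E a z → Covers T s(a, z) s(x, y) :=
  statement11_general T hT r E a x y hxpath hpar hcov
end

section
/- Let T be a tree rooted at r with link set E, and let Ê be the shadow closure of E, i.e., E together with all shadows of links of E. Then for every F̂ ⊆ Ê that covers T there exists F ⊆ E that covers T with |F| ≤ |F̂|. In particular, the minimum size of a cover of T from Ê equals the minimum size of a cover of T from E. -/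
open scoped Classical

lemma pathEdges_symm {V : Type*} (T : SimpleGraph V) (u v : V) :
    pathEdges T u v = pathEdges T v u := by
  ext e
  constructor <;> rintro ⟨p, hp, he⟩ <;>
    exact ⟨p.reverse, hp.reverse, by simpa using he⟩

/-- let `Ê` be the shadow closure of `E`. Then every cover `F̂ ⊆ Ê` of `T`
can be replaced by a cover `F ⊆ E` with `|F| ≤ |F̂|`. -/
theorem statement14 {V : Type*} [Fintype V] (T : SimpleGraph V) (hT : T.IsTree) (r : V)
    (E Ehat : Finset (Sym2 V))
    (hlinks : ∀ l ∈ E, ¬ l.IsDiag)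
    (hEhat : ∀ l, l ∈ Ehat ↔
      (l ∈ E ∨ ∃ a b c d, s(a, b) ∈ E ∧ IsShadow T c d a b ∧ l = s(c, d))) :
    ∀ Fhat ⊆ Ehat, CoversTree T ↑Fhat →
      ∃ F ⊆ E, CoversTree T ↑F ∧ F.card ≤ Fhat.card := by
  intro Fhat hFsub hFcov
  -- for each link l, a "parent" link in E whose path contains l's path
  set P : Sym2 V → Sym2 V → Prop := fun l m =>
    m ∈ E ∧ ∀ u v : V, l = s(u, v) →
      ∃ a b : V, m = s(a, b) ∧ pathEdges T u v ⊆ pathEdges T a b with hP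
  have hex : ∀ l ∈ Fhat, ∃ m, P l m := by
    intro l hl
    rcases (hEhat l).1 (hFsub hl) with hE | ⟨a, b, c, d, hab, hsh, rfl⟩
    · exact ⟨l, hE, fun u v huv => ⟨u, v, huv, subset_rfl⟩⟩
    · refine ⟨s(a, b), hab, fun u v huv => ⟨a, b, rfl, ?_⟩⟩
      have h1 : pathEdges T u v = pathEdges T c d := by
        rw [Sym2.eq_iff] at huv
        rcases huv with ⟨h1, h2⟩ | ⟨h1, h2⟩
        · rw [h1, h2]
        · rw [h1, h2]; exact pathEdges_symm T u v
      rw [h1]; exact hsh.2.subset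
  classical
  set g : Sym2 V → Sym2 V := fun l => if h : ∃ m, P l m then h.choose else l with hg
  refine ⟨Fhat.image g, ?_, ?_, Finset.card_image_le⟩
  · intro m hm
    rcases Finset.mem_image.1 hm with ⟨l, hl, rfl⟩
    have h : ∃ m, P l m := hex l hl
    simp only [hg, dif_pos h]
    exact h.choose_spec.1
  · intro e he
    rcases hFcov e he with ⟨l, hl, u, v, huv, hepath⟩
    have hl' : l ∈ Fhat := hl
    have h : ∃ m, P l m := hex l hl'
    rcases h.choose_spec.2 u v huv with ⟨a, b, hab, hsub⟩
    refine ⟨g l, Finset.mem_coe.2 (Finset.mem_image_of_mem g hl'), a, b, ?_, hsub hepath⟩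
    simp only [hg, dif_pos h]; exact hab
end
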